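/- For nonnegative integers n, r, the graph G = K_{n+r+2} + ((2r+4)K_2) is (n+r+2)-connected, has isolated toughness I(G) = (n+3(r+2))/(2(r+2)), and is not (P_{≥3},n)-factor critical avoidable. -/

import Mathlib

open SimpleGraph

/-- Number of isolated vertices of a graph. -/
noncomputable def isolCount {V : Type*} (G : SimpleGraph V) : ℕ :=
  Nat.card {v : V // ∀ w, ¬ G.Adj v w}

/-- Number of connected components of a graph. -/
noncomputable def compCount {V : Type*} (G : SimpleGraph V) : ℕ :=
  Nat.card G.ConnectedComponent

/-- Number of vertices of degree exactly one. -/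
noncomputable def deg1Count {V : Type*} (G : SimpleGraph V) : ℕ :=
  Nat.card {v : V // Nat.card {w : V // G.Adj v w} = 1}

/-- A graph is factor-critical if deleting any vertex leaves a graph with a perfect matching. -/
def IsFactorCritical {V : Type*} (G : SimpleGraph V) : Prop :=
  ∀ v : V, ∃ M : (G.induce ({v}ᶜ : Set V)).Subgraph, M.IsPerfectMatching

/-- `G` is the corona of the factor-critical graph induced on `S` (with `3 ≤ |S|`):
every vertex outside `S` is a pendant vertex attached to its own vertex of `S`. -/
def IsCoronaOfFactorCritical {V : Type*} (G : SimpleGraph V) (S : Set V) : Prop :=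
  3 ≤ Nat.card S ∧ IsFactorCritical (G.induce S) ∧
  ∃ z : S ≃ ↥(Sᶜ), ∀ (y : S) (w : V), G.Adj ((z y : ↥(Sᶜ)) : V) w ↔ w = (y : V)

/-- A sun is `K₁`, `K₂`, or the corona of a factor-critical graph with at least 3 vertices. -/
def IsSunGraph {V : Type*} (G : SimpleGraph V) : Prop :=
  Nat.card V = 1 ∨ (Nat.card V = 2 ∧ G.Connected) ∨ ∃ S : Set V, IsCoronaOfFactorCritical G S

/-- The number of sun components of a graph. -/
noncomputable def sunCount {V : Type*} (G : SimpleGraph V) : ℕ :=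
  Nat.card {C : G.ConnectedComponent // IsSunGraph (G.induce C.supp)}

/-- `G` has a `P_{≥k}`-factor: a spanning subgraph all of whose components are paths
of order at least `k`. -/
def HasPathFactor {V : Type*} (G : SimpleGraph V) (k : ℕ) : Prop :=
  ∃ F : SimpleGraph V, F ≤ G ∧ ∀ C : F.ConnectedComponent,
    ∃ m : ℕ, k ≤ m ∧ Nonempty ((F.induce C.supp) ≃g pathGraph m)

/-- Vertex `k`-connectivity: more than `k` vertices, and removing fewer than `k`
vertices leaves a connected graph. -/
def IsKConnected {V : Type*} (G : SimpleGraph V) (k : ℕ) : Prop :=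
  k < Nat.card V ∧ ∀ S : Set V, Nat.card S < k → (G.induce (Sᶜ : Set V)).Connected

/-- The toughness of a graph, valued in `ℝ≥0∞` (infimum over the empty set is `∞`,
which covers complete graphs). -/
noncomputable def toughness {V : Type*} (G : SimpleGraph V) : ENNReal :=
  ⨅ X : {X : Set V // 2 ≤ compCount (G.induce (Xᶜ : Set V))},
    (Nat.card X.1 : ENNReal) / (compCount (G.induce ((X.1)ᶜ : Set V)) : ENNReal)

/-- The isolated toughness of a graph, valued in `ℝ≥0∞`. -/
noncomputable def isolatedToughness {V : Type*} (G : SimpleGraph V) : ENNReal :=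
  ⨅ X : {X : Set V // 2 ≤ isolCount (G.induce (Xᶜ : Set V))},
    (Nat.card X.1 : ENNReal) / (isolCount (G.induce ((X.1)ᶜ : Set V)) : ENNReal)

/-- `G` is `(P_{≥k}, n)`-factor critical avoidable: for every vertex set `W` of size `n`
and every edge `e` of `G − W`, the graph `G − W − e` has a `P_{≥k}`-factor. -/
def PathFactorCriticalAvoidable {V : Type*} (G : SimpleGraph V) (k n : ℕ) : Prop :=
  ∀ W : Set V, Nat.card W = n → ∀ e ∈ (G.induce (Wᶜ : Set V)).edgeSet,
    HasPathFactor ((G.induce (Wᶜ : Set V)).deleteEdges {e}) k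

/-- The join of two graphs: all edges between the two sides. -/
def graphJoin {α β : Type*} (G : SimpleGraph α) (H : SimpleGraph β) :
    SimpleGraph (α ⊕ β) where
  Adj x y :=
    match x, y with
    | Sum.inl a, Sum.inl b => G.Adj a b
    | Sum.inr a, Sum.inr b => H.Adj a b
    | _, _ => True
  symm := ⟨by rintro (a|a) (b|b) h <;> simp_all <;> exact h.symm⟩
  loopless := ⟨by rintro (a|a) h <;> simp_all⟩

/-- The disjoint union of two graphs. -/
def disjUnion {α β : Type*} (G : SimpleGraph α) (H : SimpleGraph β) :
    SimpleGraph (α ⊕ β) where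
  Adj x y :=
    match x, y with
    | Sum.inl a, Sum.inl b => G.Adj a b
    | Sum.inr a, Sum.inr b => H.Adj a b
    | _, _ => False
  symm := ⟨by rintro (a|a) (b|b) h <;> simp_all <;> exact h.symm⟩
  loopless := ⟨by rintro (a|a) h <;> simp_all⟩

/-- `b` disjoint copies of `K₂`. -/
def copiesK2 (b : ℕ) : SimpleGraph (Fin b × Fin 2) where
  Adj x y := x.1 = y.1 ∧ x.2 ≠ y.2
  symm := ⟨by rintro x y ⟨h1, h2⟩; exact ⟨h1.symm, h2.symm⟩⟩
  loopless := ⟨by rintro x ⟨h1, h2⟩; exact h2 rfl⟩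

/-
The clique vertices `inl a` of `K_m + bK₂` are universal. Hence deleting fewer than `m` vertices
leaves a universal vertex, and a set `X` whose deletion leaves at least two isolated vertices must
contain the whole clique together with the `K₂`-partner of each isolated vertex. This gives
`|X| ≥ m + i(G - X)` and `i(G - X) ≤ b`, so `|X| / i(G - X) ≥ (m + b) / b`, with equality when
`X` is everything but one end of each `K₂`.

For non-avoidability delete `n` clique vertices and the edge of one `K₂`. In a `P_{≥3}`-factor each of
the `b - 1` intact `K₂`s and each of the two ends of the broken one is too small to be a union of
paths, so it sends a factor edge into the remaining `m - n` clique vertices; these have factor degree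
at most `2`, and `b + 1 > 2 (m - n)`.
-/

namespace SimpleGraph

variable {V : Type*} {F : SimpleGraph V}

theorem IsUniversal.induce {G : SimpleGraph V} {s : Set V} {v : V} (hv : v ∈ s)
    (h : G.IsUniversal v) : (G.induce s).IsUniversal ⟨v, hv⟩ :=
  fun _ hne => h (Subtype.coe_ne_coe.mpr hne)

theorem pathGraph_degree_le_two :
    ∀ {m : ℕ} (u : Fin m) [Fintype ((pathGraph m).neighborSet u)], (pathGraph m).degree u ≤ 2
  | 0, u, _ => u.elim0
  | 1, u, _ => by
    rw [← card_neighborSet_eq_degree]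
    exact (Fintype.card_le_of_injective _ Subtype.val_injective).trans (by simp)
  | _ + 2, _, _ => (degree_le_of_le pathGraph_le_cycleGraph).trans
      (cycleGraph_degree_two_le ▸ Finset.card_le_two)

theorem supp_connectedComponentMk_subset {T : Set V} (hT : ∀ x ∈ T, ∀ y, F.Adj x y → y ∈ T)
    {v : V} (hv : v ∈ T) : (F.connectedComponentMk v).supp ⊆ T := by
  suffices ∀ {u w : V} (p : F.Walk u w), u ∈ T → w ∈ T from
    fun w hw => this (ConnectedComponent.exact hw).some.reverse hv
  intro u w p
  induction p with
  | nil => exact id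
  | cons h _ ih => exact fun hu => ih (hT _ hu _ h)

def IsPathForest (F : SimpleGraph V) (k : ℕ) : Prop :=
  ∀ C : F.ConnectedComponent, ∃ m, k ≤ m ∧ Nonempty (F.induce C.supp ≃g pathGraph m)

namespace IsPathForest

variable {k : ℕ}

theorem le_encard_supp (hF : F.IsPathForest k) (C : F.ConnectedComponent) :
    k ≤ C.supp.encard := by
  obtain ⟨m, hm, ⟨φ⟩⟩ := hF C
  rw [Set.encard, ENat.card_congr φ.toEquiv, ENat.card_eq_coe_fintype_card, Fintype.card_fin]
  exact_mod_cast hm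

theorem degree_le_two (hF : F.IsPathForest k) [Fintype V] [DecidableRel F.Adj] (v : V) :
    F.degree v ≤ 2 := by
  classical
  set C := F.connectedComponentMk v
  obtain ⟨m, -, ⟨φ⟩⟩ := hF C
  have hsub : F.neighborSet v ⊆ C.supp :=
    fun w hw => (ConnectedComponent.connectedComponentMk_eq_of_adj hw).symm
  rw [← degree_induce_of_neighborSet_subset (s := C.supp) (v := ⟨v, rfl⟩) hsub, ← φ.degree_eq]
  exact pathGraph_degree_le_two _

theorem exists_adj_notMem (hF : F.IsPathForest k) {T : Set V} (hT : T.Nonempty)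
    (hk : T.encard < k) : ∃ x ∈ T, ∃ y ∉ T, F.Adj x y := by
  by_contra! h
  obtain ⟨x, hx⟩ := hT
  have hsub := supp_connectedComponentMk_subset
    (fun x hx y hxy => not_not.mp fun hy => h x hx y hy hxy) hx
  exact (hk.trans_le ((hF.le_encard_supp _).trans (Set.encard_le_encard hsub))).false

end IsPathForest

open Finset in
/-- Each fibre `{x ∉ S | π x = i}` is a union of components of `H - S` with fewer than `k`
vertices, so a `P_{≥k}`-factor has an edge from it into `S`; but `S` meets at most `2 |S|`
factor edges. -/
theorem card_le_two_mul_ncard_of_hasPathFactor [Finite V] {H : SimpleGraph V} {k : ℕ}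
    (hH : HasPathFactor H k) (S : Set V) {ι : Type*} [Finite ι] (π : V → ι)
    (hsurj : ∀ i, ∃ x ∉ S, π x = i) (hsmall : ∀ i, {x | x ∉ S ∧ π x = i}.encard < k)
    (hclosed : ∀ x y, x ∉ S → H.Adj x y → y ∈ S ∨ π y = π x) :
    Nat.card ι ≤ 2 * S.ncard := by
  classical
  have := Fintype.ofFinite V
  have := Fintype.ofFinite ι
  obtain ⟨F, hFH, hF⟩ := hH
  have hout : ∀ i, ∃ x, (x ∉ S ∧ π x = i) ∧ ∃ s ∈ S, F.Adj s x := by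
    intro i
    obtain ⟨x, hx⟩ := hsurj i
    obtain ⟨y, hy, z, hz, hyz⟩ := IsPathForest.exists_adj_notMem hF ⟨x, hx⟩ (hsmall i)
    by_cases hzS : z ∈ S
    · exact ⟨y, hy, z, hzS, hyz.symm⟩
    · exact absurd ⟨hzS, ((hclosed y z hy.1 (hFH hyz)).resolve_left hzS).trans hy.2⟩ hz
  choose x hx s hs hsx using hout
  calc Nat.card ι
      ≤ #(S.toFinset.sigma fun s => F.neighborFinset s) := by
        rw [Nat.card_eq_fintype_card]
        refine card_le_card_of_injOn (s := univ) (fun i => ⟨s i, x i⟩) (fun i _ => ?_) ?_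
        · simpa using ⟨hs i, hsx i⟩
        · intro i _ j _ hij
          rw [← (hx i).2, ← (hx j).2]
          exact congrArg π (Sigma.mk.inj_iff.mp hij).2.eq
    _ = ∑ s ∈ S.toFinset, F.degree s := by simp [card_sigma]
    _ ≤ #S.toFinset • 2 := sum_le_card_nsmul _ _ _ fun v _ => IsPathForest.degree_le_two hF v
    _ = 2 * S.ncard := by rw [smul_eq_mul, mul_comm, Set.ncard_eq_toFinset_card']

end SimpleGraph

open scoped ENNReal

theorem ENNReal.natCast_div_le_natCast_div {a b c d : ℕ} (hb : b ≠ 0) (hd : d ≠ 0)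
    (h : a * d ≤ c * b) : (a : ℝ≥0∞) / b ≤ c / d := by
  rw [ENNReal.div_le_iff_le_mul (Or.inl (by exact_mod_cast hb)) (Or.inl (by simp)),
    div_eq_mul_inv, mul_right_comm, ← div_eq_mul_inv,
    ENNReal.le_div_iff_mul_le (Or.inl (by exact_mod_cast hd)) (Or.inl (by simp))]
  exact_mod_cast h

section Isolated

variable {V : Type*} (G : SimpleGraph V)

def isolatedVerts (X : Set V) : Set V := {v | v ∉ X ∧ ∀ w ∉ X, ¬ G.Adj v w}

theorem isolCount_induce_compl (X : Set V) :
    isolCount (G.induce Xᶜ) = (isolatedVerts G X).ncard := by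
  rw [isolCount, ← Nat.card_coe_set_eq]
  exact Nat.card_congr
    { toFun v := ⟨v.1, v.1.2, fun w hw => v.2 ⟨w, hw⟩⟩
      invFun v := ⟨⟨v, v.2.1⟩, fun w => v.2.2 w w.2⟩ }

variable {G}

theorem isolatedVerts_subset_singleton {X : Set V} {u : V} (hu : G.IsUniversal u) (huX : u ∉ X) :
    isolatedVerts G X ⊆ {u} := by
  by_contra! h
  obtain ⟨v, ⟨hvX, hv⟩, hvu⟩ := Set.not_subset.mp h
  exact hv u huX (hu (Ne.symm hvu)).symm

theorem isolatedVerts_compl {A : Set V} (hA : G.IsIndepSet A) : isolatedVerts G Aᶜ = A := by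
  ext v
  simp only [isolatedVerts, Set.mem_ofPred_eq, Set.mem_compl_iff, not_not]
  exact ⟨And.left, fun hv => ⟨hv, fun w hw hvw => hA hv hw (G.ne_of_adj hvw) hvw⟩⟩

end Isolated

section GraphJoin

variable {α β : Type*}

@[simp] theorem graphJoin_adj_inl_inl (G : SimpleGraph α) (H : SimpleGraph β) (a a' : α) :
    (graphJoin G H).Adj (.inl a) (.inl a') ↔ G.Adj a a' := Iff.rfl

@[simp] theorem graphJoin_adj_inr_inr (G : SimpleGraph α) (H : SimpleGraph β) (b b' : β) :
    (graphJoin G H).Adj (.inr b) (.inr b') ↔ H.Adj b b' := Iff.rfl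

theorem isUniversal_graphJoin_top_inl (H : SimpleGraph β) (a : α) :
    (graphJoin (⊤ : SimpleGraph α) H).IsUniversal (.inl a) := by
  rintro (a' | b) hne
  · simpa using hne
  · trivial

theorem isKConnected_graphJoin_top [Finite α] [Finite β] [Nonempty β] (H : SimpleGraph β) :
    IsKConnected (graphJoin (⊤ : SimpleGraph α) H) (Nat.card α) := by
  refine ⟨by simp [Nat.card_sum], fun S hS => ?_⟩
  obtain ⟨a, ha⟩ : ∃ a : α, Sum.inl a ∉ S := by
    by_contra! h
    have := Set.ncard_le_ncard (Set.range_subset_iff.mpr h)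
    rw [Set.ncard_range_of_injective Sum.inl_injective, ← Nat.card_coe_set_eq] at this
    omega
  exact Connected.of_isUniversal ((isUniversal_graphJoin_top_inl H a).induce ha)

end GraphJoin

theorem copiesK2_adj {b : ℕ} {p q : Fin b × Fin 2} :
    (copiesK2 b).Adj p q ↔ q = (p.1, p.2.rev) := by
  obtain ⟨j, c⟩ := p
  obtain ⟨k, d⟩ := q
  simp only [copiesK2, Prod.mk.injEq]
  fin_cases c <;> fin_cases d <;> simp [eq_comm]

section JoinWithCopiesK2

variable {α : Type*} {b : ℕ}

def k2Mate : α ⊕ (Fin b × Fin 2) ≃ α ⊕ (Fin b × Fin 2) :=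
  Equiv.sumCongr (Equiv.refl α) ((Equiv.refl _).prodCongr Fin.revPerm)

theorem range_inl_subset_of_one_lt_ncard_isolatedVerts {X : Set (α ⊕ (Fin b × Fin 2))}
    (h : 1 < (isolatedVerts (graphJoin ⊤ (copiesK2 b)) X).ncard) : Set.range Sum.inl ⊆ X := by
  rintro _ ⟨a, rfl⟩
  by_contra ha
  have := Set.ncard_le_ncard
    (isolatedVerts_subset_singleton (isUniversal_graphJoin_top_inl (copiesK2 b) a) ha)
  rw [Set.ncard_singleton] at this
  omega

theorem mem_range_inr_and_k2Mate_mem {X : Set (α ⊕ (Fin b × Fin 2))} (hX : Set.range Sum.inl ⊆ X)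
    {v : α ⊕ (Fin b × Fin 2)} (hv : v ∈ isolatedVerts (graphJoin ⊤ (copiesK2 b)) X) :
    v ∈ Set.range Sum.inr ∧ k2Mate v ∈ X := by
  obtain ⟨hvX, hiso⟩ := hv
  rcases v with a | p
  · exact absurd (hX ⟨a, rfl⟩) hvX
  · refine ⟨⟨p, rfl⟩, not_not.mp fun h => hiso _ h ?_⟩
    simp [k2Mate, copiesK2_adj, Prod.map]

variable [Finite α]

theorem card_add_ncard_isolatedVerts_le {X : Set (α ⊕ (Fin b × Fin 2))}
    (hX : Set.range Sum.inl ⊆ X) :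
    Nat.card α + (isolatedVerts (graphJoin ⊤ (copiesK2 b)) X).ncard ≤ X.ncard := by
  set I := isolatedVerts (graphJoin ⊤ (copiesK2 b)) X
  have hdisj : Disjoint (Set.range Sum.inl) (k2Mate '' I) := by
    rw [Set.disjoint_left]
    rintro _ ⟨a, rfl⟩ ⟨v, hv, hva⟩
    obtain ⟨⟨p, rfl⟩, -⟩ := mem_range_inr_and_k2Mate_mem hX hv
    simp [k2Mate] at hva
  have hsub : Set.range Sum.inl ∪ k2Mate '' I ⊆ X :=
    Set.union_subset hX (Set.image_subset_iff.mpr fun v hv => (mem_range_inr_and_k2Mate_mem hX hv).2)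
  have := Set.ncard_le_ncard hsub
  rwa [Set.ncard_union_eq hdisj, Set.ncard_range_of_injective Sum.inl_injective,
    Set.ncard_image_of_injective _ k2Mate.injective] at this

theorem ncard_isolatedVerts_le {X : Set (α ⊕ (Fin b × Fin 2))} (hX : Set.range Sum.inl ⊆ X) :
    (isolatedVerts (graphJoin ⊤ (copiesK2 b)) X).ncard ≤ b := by
  set I := isolatedVerts (graphJoin ⊤ (copiesK2 b)) X
  have hdisj : Disjoint I (k2Mate '' I) := by
    rw [Set.disjoint_left]
    rintro v hv ⟨w, hw, rfl⟩
    exact hv.1 (mem_range_inr_and_k2Mate_mem hX hw).2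
  have hsub : I ∪ k2Mate '' I ⊆ Set.range Sum.inr := by
    refine Set.union_subset (fun v hv => (mem_range_inr_and_k2Mate_mem hX hv).1) ?_
    rintro _ ⟨v, hv, rfl⟩
    obtain ⟨⟨p, rfl⟩, -⟩ := mem_range_inr_and_k2Mate_mem hX hv
    exact ⟨_, rfl⟩
  have := Set.ncard_le_ncard hsub
  rw [Set.ncard_union_eq hdisj, Set.ncard_image_of_injective _ k2Mate.injective,
    Set.ncard_range_of_injective Sum.inr_injective] at this
  simp at this
  omega

theorem isolatedToughness_graphJoin_top_copiesK2 (hb : 2 ≤ b) :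
    isolatedToughness (graphJoin (⊤ : SimpleGraph α) (copiesK2 b)) =
      ((Nat.card α + b : ℕ) : ℝ≥0∞) / b := by
  simp only [isolatedToughness, isolCount_induce_compl, Nat.card_coe_set_eq]
  apply le_antisymm
  · set A : Set (α ⊕ (Fin b × Fin 2)) := Set.range fun j => Sum.inr (j, 0)
    have hA : (graphJoin ⊤ (copiesK2 b)).IsIndepSet A := by
      rintro _ ⟨j, rfl⟩ _ ⟨k, rfl⟩ -
      simp [copiesK2_adj]
    have hAcard : A.ncard = b := by
      rw [Set.ncard_range_of_injective fun j k h => by simpa using h, Nat.card_fin]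
    have hAc : Aᶜ.ncard = Nat.card α + b := by
      rw [Set.ncard_compl, hAcard, Nat.card_sum, Nat.card_prod, Nat.card_fin, Nat.card_fin]
      omega
    refine iInf_le_of_le ⟨Aᶜ, by rwa [isolCount_induce_compl, isolatedVerts_compl hA, hAcard]⟩ ?_
    simp only [isolatedVerts_compl hA, hAcard, hAc, le_refl]
  · refine le_iInf fun X => ?_
    have hX := X.2
    rw [isolCount_induce_compl] at hX
    refine ENNReal.natCast_div_le_natCast_div (by omega) (by omega) ?_
    have hleft := range_inl_subset_of_one_lt_ncard_isolatedVerts (X := X.1) (by omega)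
    have h1 := card_add_ncard_isolatedVerts_le hleft
    have h2 := ncard_isolatedVerts_le hleft
    nlinarith

end JoinWithCopiesK2

section CliqueDeletion

variable {α : Type*} {b : ℕ} (s : Set α)

def rightVertex (p : Fin b × Fin 2) : ↥(Sum.inl '' s : Set (α ⊕ (Fin b × Fin 2)))ᶜ :=
  ⟨Sum.inr p, by simp⟩

theorem exists_eq_rightVertex {u : ↥(Sum.inl '' s : Set (α ⊕ (Fin b × Fin 2)))ᶜ}
    (hu : ¬ u.1.isLeft) : ∃ p, u = rightVertex s p := by
  obtain ⟨_ | p, _⟩ := u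
  · simp at hu
  · exact ⟨p, rfl⟩

theorem ncard_isLeft_le [Finite α] :
    {u : ↥(Sum.inl '' s : Set (α ⊕ (Fin b × Fin 2)))ᶜ | u.1.isLeft}.ncard ≤
      Nat.card α - s.ncard := by
  calc _ = (Subtype.val '' {u : ↥(Sum.inl '' s : Set (α ⊕ (Fin b × Fin 2)))ᶜ |
        u.1.isLeft}).ncard := (Set.ncard_image_of_injective _ Subtype.val_injective).symm
    _ ≤ (Sum.inl '' sᶜ).ncard := by
      refine Set.ncard_le_ncard ?_
      rintro _ ⟨⟨_ | p, hu⟩, hl, rfl⟩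
      · simpa using hu
      · simp at hl
    _ = Nat.card α - s.ncard := by
      rw [Set.ncard_image_of_injective _ Sum.inl_injective, Set.ncard_compl]

/-- The parts of the clique-deleted graph with the edge of the `j₀`-th `K₂` removed: the intact
`K₂`s are the parts `some j`, and the broken one is split into `some j₀` and `none`. -/
def brokenPairPart (j₀ : Fin b) : α ⊕ (Fin b × Fin 2) → Option (Fin b) :=
  Sum.elim (fun _ => none) fun p => if p = (j₀, 1) then none else some p.1

variable {s}

theorem encard_brokenPairPart_lt (j₀ : Fin b) (i : Option (Fin b)) :
    {u : ↥(Sum.inl '' s : Set (α ⊕ (Fin b × Fin 2)))ᶜ |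
      ¬ u.1.isLeft ∧ brokenPairPart j₀ u.1 = i}.encard < 3 := by
  set j := i.getD j₀
  refine (Set.encard_le_encard (t := {rightVertex s (j, 0), rightVertex s (j, 1)}) ?_).trans_lt
    ((Set.encard_insert_le _ _).trans_lt (by norm_num))
  rintro u ⟨hu, rfl⟩
  obtain ⟨⟨k, c⟩, rfl⟩ := exists_eq_rightVertex s hu
  have hk : k = j := by
    simp only [j, brokenPairPart, rightVertex, Sum.elim_inr]
    split_ifs with h <;> simp_all
  fin_cases c <;> simp [hk]

theorem brokenPairPart_eq_of_adj (j₀ : Fin b)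
    {u v : ↥(Sum.inl '' s : Set (α ⊕ (Fin b × Fin 2)))ᶜ} (hu : ¬ u.1.isLeft)
    (huv : (((graphJoin ⊤ (copiesK2 b)).induce _).deleteEdges
      {s(rightVertex s (j₀, 0), rightVertex s (j₀, 1))}).Adj u v) :
    v.1.isLeft ∨ brokenPairPart j₀ v.1 = brokenPairPart j₀ u.1 := by
  obtain ⟨⟨j, c⟩, rfl⟩ := exists_eq_rightVertex s hu
  by_cases hv : v.1.isLeft
  · exact Or.inl hv
  obtain ⟨q, rfl⟩ := exists_eq_rightVertex s hv
  obtain ⟨hadj, hne⟩ := deleteEdges_adj.mp huv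
  obtain rfl : q = (j, c.rev) := by simpa [rightVertex, copiesK2_adj] using hadj
  have hj : j ≠ j₀ := by
    rintro rfl
    fin_cases c
    exacts [hne rfl, hne Sym2.eq_swap]
  simp [brokenPairPart, rightVertex, hj]

theorem not_pathFactorCriticalAvoidable_graphJoin_top_copiesK2 [Finite α] {n : ℕ}
    (hn : n ≤ Nat.card α) (hb : 2 * (Nat.card α - n) ≤ b) (hb0 : 0 < b) :
    ¬ PathFactorCriticalAvoidable (graphJoin (⊤ : SimpleGraph α) (copiesK2 b)) 3 n := by
  intro h
  obtain ⟨s, -, hs⟩ := Set.exists_subset_card_eq (s := Set.univ) (by simpa using hn)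
  have hW : Nat.card (Sum.inl '' s : Set (α ⊕ (Fin b × Fin 2))) = n := by
    rw [Nat.card_coe_set_eq, Set.ncard_image_of_injective _ Sum.inl_injective, hs]
  set j₀ : Fin b := ⟨0, hb0⟩
  have he : s(rightVertex s (j₀, 0), rightVertex s (j₀, 1)) ∈
      ((graphJoin ⊤ (copiesK2 b)).induce _).edgeSet := by
    simp [rightVertex, copiesK2_adj]
  have hcount := card_le_two_mul_ncard_of_hasPathFactor (h _ hW _ he) {u | u.1.isLeft}
    (brokenPairPart j₀ ∘ Subtype.val) ?_ (encard_brokenPairPart_lt j₀)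
    (fun _ _ => brokenPairPart_eq_of_adj j₀)
  · have hleft := ncard_isLeft_le (b := b) s
    rw [Nat.card_eq_fintype_card, Fintype.card_option, Fintype.card_fin] at hcount
    omega
  · rintro (_ | j)
    · exact ⟨rightVertex s (j₀, 1), by simp [rightVertex, brokenPairPart]⟩
    · exact ⟨rightVertex s (j, 0), by simp [rightVertex, brokenPairPart]⟩

end CliqueDeletion

/-- Remark 5: sharpness of the isolated toughness bound in Theorem 8. -/
theorem stmt11 (n r : ℕ)
    (G : SimpleGraph (Fin (n + r + 2) ⊕ (Fin (2 * r + 4) × Fin 2)))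
    (hG : G = graphJoin (⊤ : SimpleGraph (Fin (n + r + 2))) (copiesK2 (2 * r + 4))) :
    IsKConnected G (n + r + 2) ∧
    isolatedToughness G = ((n : ENNReal) + 3 * ((r : ENNReal) + 2)) / (2 * ((r : ENNReal) + 2)) ∧
    ¬ PathFactorCriticalAvoidable G 3 n := by
  subst hG
  refine ⟨?_, ?_, ?_⟩
  · simpa using isKConnected_graphJoin_top (α := Fin (n + r + 2)) (copiesK2 (2 * r + 4))
  · rw [isolatedToughness_graphJoin_top_copiesK2 (by omega), Nat.card_fin]
    congr 1 <;> push_cast <;> ring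
  · exact not_pathFactorCriticalAvoidable_graphJoin_top_copiesK2 (by simp; omega) (by simp; omega)
      (by omega)
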